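/- Lemma (boundedness for a nonlinear integral inequality with a weakly singular kernel, Lemma `Ll` of the paper). Let α > −1, C > 0, τ₊ > 0, and let Φ : ℝ → ℝ be continuous. Let F : [0,τ₊) → (0,∞) be continuous and satisfy, for all τ ∈ [0,τ₊), F(τ) ≤ C·F(0) + ∫₀^τ Φ(F(σ)) (1 + (τ−σ)^α) dσ. Set M := sup { |Φ(s)| : 0 ≤ s ≤ C·F(0)+1 }. If M = 0, then F(τ) ≤ C·F(0)+1 for all τ ∈ [0,τ₊). If M > 0, set τ* := min( 1/(2M), ((α+1)/(2M))^{1/(α+1)} ); then F(τ) ≤ C·F(0)+1 for all τ ∈ [0,τ₊) with τ < τ*. In particular the bound τ* depends only on C, F(0), α and Φ. -/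

import Mathlib

open Real Set intervalIntegral

/-!
The kernel `1 + (τ - σ) ^ α` has mass `τ + τ ^ (α + 1) / (α + 1)` on `[0, τ]`. As long as `F`
stays in `[0, C·F 0 + 1]`, the integral term is therefore at most `M` times this mass, and the
choice of `τ*` makes each of the two summands contribute less than `1/2`. Since `F 0 ≤ C·F 0`,
a continuity argument shows that `F` cannot reach the level `C·F 0 + 1` before `τ*`.
-/

/-- The first point where `F` reaches `B` contradicts `hstep`: continuity gives `F ≤ B` there
from `F < B` before it. -/
theorem ContinuousOn.forall_lt_of_bootstrap {F : ℝ → ℝ} {a b B : ℝ}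
    (hF : ContinuousOn F (Icc a b)) (ha : F a ≤ B)
    (hstep : ∀ s ∈ Icc a b, (∀ σ ∈ Icc a s, F σ ≤ B) → F s < B) :
    ∀ s ∈ Icc a b, F s < B := by
  by_contra! hbad
  have hclosed : IsClosed (Icc a b ∩ F ⁻¹' Ici B) :=
    hF.preimage_isClosed_of_isClosed isClosed_Icc isClosed_Ici
  obtain ⟨u, ⟨huab, hBu⟩, hleast⟩ :=
    (isCompact_Icc.of_isClosed_subset hclosed inter_subset_left).exists_isLeast hbad
  have hbelow : ∀ σ ∈ Ico a u, F σ ≤ B := fun σ hσ => not_lt.mp fun h =>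
    hσ.2.not_ge (hleast ⟨⟨hσ.1, hσ.2.le.trans huab.2⟩, h.le⟩)
  have hupto : ∀ σ ∈ Icc a u, F σ ≤ B := by
    intro σ hσ
    rcases huab.1.eq_or_lt with rfl | hau
    · rwa [le_antisymm hσ.2 hσ.1]
    · rw [← closure_Ico hau.ne] at hσ
      exact le_on_closure hbelow
        (hF.mono (closure_Ico hau.ne ▸ Icc_subset_Icc_right huab.2)) continuousOn_const hσ
  exact (hstep u huab hupto).not_ge hBu

theorem intervalIntegrable_rpow_sub_left {α : ℝ} (hα : -1 < α) (τ a b : ℝ) :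
    IntervalIntegrable (fun σ => (τ - σ) ^ α) MeasureTheory.volume a b := by
  simpa using ((intervalIntegrable_rpow' hα (a := τ - a) (b := τ - b)).comp_sub_left τ)

theorem integral_rpow_sub_left {α : ℝ} (hα : -1 < α) (τ : ℝ) :
    ∫ σ in (0 : ℝ)..τ, (τ - σ) ^ α = τ ^ (α + 1) / (α + 1) := by
  rw [integral_comp_sub_left (fun s => s ^ α) τ, sub_self, sub_zero, integral_rpow (Or.inl hα),
    zero_rpow (by linarith), sub_zero]

theorem integral_one_add_rpow_sub_left {α : ℝ} (hα : -1 < α) (τ : ℝ) :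
    ∫ σ in (0 : ℝ)..τ, (1 + (τ - σ) ^ α) = τ + τ ^ (α + 1) / (α + 1) := by
  rw [integral_add intervalIntegrable_const (intervalIntegrable_rpow_sub_left hα τ 0 τ),
    integral_rpow_sub_left hα, intervalIntegral.integral_const, sub_zero, smul_eq_mul, mul_one]

theorem integral_mul_one_add_rpow_sub_left_le {α M τ : ℝ} {g : ℝ → ℝ} (hα : -1 < α) (hτ : 0 ≤ τ)
    (hg : ∀ σ ∈ Icc 0 τ, |g σ| ≤ M) :
    ∫ σ in (0 : ℝ)..τ, g σ * (1 + (τ - σ) ^ α) ≤ M * (τ + τ ^ (α + 1) / (α + 1)) := by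
  have hbound : ∀ σ ∈ Ioc 0 τ, ‖g σ * (1 + (τ - σ) ^ α)‖ ≤ M * (1 + (τ - σ) ^ α) := by
    intro σ hσ
    have hkernel : 0 ≤ 1 + (τ - σ) ^ α := by
      have := rpow_nonneg (sub_nonneg.mpr hσ.2) α
      linarith
    rw [norm_mul, norm_of_nonneg hkernel]
    exact mul_le_mul_of_nonneg_right (hg σ (Ioc_subset_Icc_self hσ)) hkernel
  calc ∫ σ in (0 : ℝ)..τ, g σ * (1 + (τ - σ) ^ α)
      ≤ ‖∫ σ in (0 : ℝ)..τ, g σ * (1 + (τ - σ) ^ α)‖ := le_norm_self _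
    _ ≤ ∫ σ in (0 : ℝ)..τ, M * (1 + (τ - σ) ^ α) :=
      norm_integral_le_of_norm_le hτ (MeasureTheory.ae_of_all _ hbound)
        ((intervalIntegrable_const.add (intervalIntegrable_rpow_sub_left hα τ 0 τ)).const_mul M)
    _ = M * (τ + τ ^ (α + 1) / (α + 1)) := by
      rw [intervalIntegral.integral_const_mul, integral_one_add_rpow_sub_left hα]

theorem lt_add_of_integral_inequality {α c δ M T τ : ℝ} {Φ F : ℝ → ℝ} (hα : -1 < α)
    (hδ : 0 < δ) (hFc : ContinuousOn F (Ico 0 T)) (hFnn : ∀ τ ∈ Ico 0 T, 0 ≤ F τ)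
    (hineq : ∀ τ ∈ Ico 0 T, F τ ≤ c + ∫ σ in (0 : ℝ)..τ, Φ (F σ) * (1 + (τ - σ) ^ α))
    (hΦM : ∀ s ∈ Icc 0 (c + δ), |Φ s| ≤ M) (hτ : τ ∈ Ico 0 T)
    (hsmall : M * (τ + τ ^ (α + 1) / (α + 1)) < δ) :
    F τ < c + δ := by
  have hsub : Icc 0 τ ⊆ Ico 0 T := Icc_subset_Ico_right hτ.2
  have h0 : (0 : ℝ) ∈ Ico 0 T := ⟨le_rfl, hτ.1.trans_lt hτ.2⟩
  have hF0 : F 0 ≤ c := by simpa using hineq 0 h0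
  have hM : 0 ≤ M := (abs_nonneg _).trans (hΦM 0 ⟨le_rfl, by linarith [hFnn 0 h0]⟩)
  refine (hFc.mono hsub).forall_lt_of_bootstrap (by linarith) (fun s hs hFs => ?_) τ
    ⟨hτ.1, le_rfl⟩
  have hmass : M * (s + s ^ (α + 1) / (α + 1)) ≤ M * (τ + τ ^ (α + 1) / (α + 1)) := by
    have : 0 < α + 1 := by linarith
    obtain ⟨hs0, hsτ⟩ := hs
    gcongr
  calc F s ≤ c + ∫ σ in (0 : ℝ)..s, Φ (F σ) * (1 + (s - σ) ^ α) := hineq s (hsub hs)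
    _ ≤ c + M * (s + s ^ (α + 1) / (α + 1)) := by
      gcongr
      exact integral_mul_one_add_rpow_sub_left_le hα hs.1 fun σ hσ =>
        hΦM _ ⟨hFnn σ (hsub (Icc_subset_Icc_right hs.2 hσ)), hFs σ hσ⟩
    _ < c + δ := by linarith

theorem mul_add_rpow_div_lt_one {α M τ : ℝ} (hα : -1 < α) (hM : 0 < M) (hτ : 0 ≤ τ)
    (hτlt : τ < min (1 / (2 * M)) (((α + 1) / (2 * M)) ^ (1 / (α + 1)))) :
    M * (τ + τ ^ (α + 1) / (α + 1)) < 1 := by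
  have hα1 : 0 < α + 1 := by linarith
  obtain ⟨hτ₁, hτ₂⟩ := lt_min_iff.mp hτlt
  have hlin : M * τ < 1 / 2 := by
    rw [lt_div_iff₀ (by positivity)] at hτ₁
    linarith
  have hpow : τ ^ (α + 1) < (α + 1) / (2 * M) := by
    have := rpow_lt_rpow hτ hτ₂ hα1
    rwa [← rpow_mul (by positivity), one_div, inv_mul_cancel₀ hα1.ne', rpow_one] at this
  have hsing : M * (τ ^ (α + 1) / (α + 1)) < 1 / 2 :=
    calc M * (τ ^ (α + 1) / (α + 1)) < M * ((α + 1) / (2 * M) / (α + 1)) := by gcongr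
      _ = 1 / 2 := by field_simp
  linarith [mul_add M τ (τ ^ (α + 1) / (α + 1))]

theorem integral_inequality_bounded_general
    (α C τplus : ℝ) (hα : -1 < α)
    (Φ : ℝ → ℝ) (hΦ : Continuous Φ)
    (F : ℝ → ℝ) (hFc : ContinuousOn F (Set.Ico 0 τplus))
    (hFpos : ∀ τ ∈ Set.Ico 0 τplus, 0 < F τ)
    (hineq : ∀ τ ∈ Set.Ico 0 τplus,
      F τ ≤ C * F 0 + ∫ σ in (0:ℝ)..τ, Φ (F σ) * (1 + (τ - σ) ^ α))
    (M : ℝ)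
    (hM : M = sSup ((fun s => |Φ s|) '' Set.Icc 0 (C * F 0 + 1))) :
    (M = 0 → ∀ τ ∈ Set.Ico 0 τplus, F τ ≤ C * F 0 + 1) ∧
    (0 < M → ∀ τ ∈ Set.Ico 0 τplus,
        τ < min (1 / (2 * M)) (((α + 1) / (2 * M)) ^ (1 / (α + 1))) →
        F τ ≤ C * F 0 + 1) := by
  have hΦM : ∀ s ∈ Icc 0 (C * F 0 + 1), |Φ s| ≤ M := fun s hs =>
    hM ▸ le_csSup (isCompact_Icc.image hΦ.abs).bddAbove (mem_image_of_mem _ hs)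
  have hbound : ∀ τ ∈ Ico 0 τplus, M * (τ + τ ^ (α + 1) / (α + 1)) < 1 → F τ ≤ C * F 0 + 1 :=
    fun τ hτ hsmall => (lt_add_of_integral_inequality hα one_pos hFc
      (fun σ hσ => (hFpos σ hσ).le) hineq hΦM hτ hsmall).le
  exact ⟨fun hM0 τ hτ => hbound τ hτ (by simp [hM0]),
    fun hMpos τ hτ hτlt => hbound τ hτ (mul_add_rpow_div_lt_one hα hMpos hτ.1 hτlt)⟩

/-- **Lemma (boundedness for a nonlinear integral inequality with a weakly singular kernel,
Lemma `Ll` of the paper).**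
Let `α > −1`, `C > 0`, `τ₊ > 0`, and `Φ : ℝ → ℝ` continuous.  Let `F : [0,τ₊) → (0,∞)` be
continuous and satisfy `F τ ≤ C·F 0 + ∫₀^τ Φ(F σ)(1 + (τ−σ)^α) dσ` for all `τ ∈ [0,τ₊)`.
Set `M := sup {|Φ s| : 0 ≤ s ≤ C·F 0 + 1}`.  If `M = 0` then `F ≤ C·F 0 + 1` on `[0,τ₊)`;
if `M > 0` then `F ≤ C·F 0 + 1` on `[0,τ₊) ∩ [0,τ*)` where
`τ* = min (1/(2M)) (((α+1)/(2M))^(1/(α+1)))`. -/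
theorem integral_inequality_bounded
    (α C τplus : ℝ) (hα : -1 < α) (hC : 0 < C) (hτplus : 0 < τplus)
    (Φ : ℝ → ℝ) (hΦ : Continuous Φ)
    (F : ℝ → ℝ) (hFc : ContinuousOn F (Set.Ico 0 τplus))
    (hFpos : ∀ τ ∈ Set.Ico 0 τplus, 0 < F τ)
    (hineq : ∀ τ ∈ Set.Ico 0 τplus,
      F τ ≤ C * F 0 + ∫ σ in (0:ℝ)..τ, Φ (F σ) * (1 + (τ - σ) ^ α))
    (M : ℝ)
    (hM : M = sSup ((fun s => |Φ s|) '' Set.Icc 0 (C * F 0 + 1))) :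
    (M = 0 → ∀ τ ∈ Set.Ico 0 τplus, F τ ≤ C * F 0 + 1) ∧
    (0 < M → ∀ τ ∈ Set.Ico 0 τplus,
        τ < min (1 / (2 * M)) (((α + 1) / (2 * M)) ^ (1 / (α + 1))) →
        F τ ≤ C * F 0 + 1) :=
  integral_inequality_bounded_general α C τplus hα Φ hΦ F hFc hFpos hineq M hM
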